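/- arXiv:2209.02635 — 7 statements merged into one kernel-verified Lean document; each statement's English description precedes it below -/
import Mathlib

section
/- Let N ≥ 1, let u ∈ ℝ^N have at least one nonzero entry, and let F : ℝ^N_{++} → ℝ^N_{++} be continuously differentiable. Assume that F connects all variables, that F scales with exponent u, and that the monotonicity behavior of F is consistent with u. If the fixed point equation x = F(x) has a solution x* ∈ ℝ^N_{++}, then the set of solutions of x = F(x) in ℝ^N_{++} is exactly { c^u x* : c ∈ (0,∞) }. -/
open Filter

/-- The positive orthant `ℝ^N_{++}`: vectors all of whose entries are strictly positive. -/
def PosOrth (N : ℕ) : Set (Fin N → ℝ) := {x | ∀ i, 0 < x i}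

/-- The Jacobian matrix of `F` at `x`: entry `(j, k)` is `∂F_j(x)/∂x_k`. -/
noncomputable def Jac {N : ℕ} (F : (Fin N → ℝ) → (Fin N → ℝ)) (x : Fin N → ℝ) :
    Matrix (Fin N) (Fin N) ℝ :=
  Matrix.of fun j k => fderiv ℝ F x (Pi.single k 1) j

/-- A matrix is irreducible if the directed graph on `Fin N` with an edge from `k` to `j`
whenever `M j k ≠ 0` is strongly connected. -/
def MatIrred {N : ℕ} (M : Matrix (Fin N) (Fin N) ℝ) : Prop :=
  ∀ a b : Fin N, Relation.TransGen (fun k j => M j k ≠ 0) a b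

/-- `pscale c u x = c^u x`, i.e. the vector with entries `c ^ (u i) * x i`. -/
noncomputable def pscale {N : ℕ} (c : ℝ) (u x : Fin N → ℝ) : Fin N → ℝ :=
  fun i => c ^ u i * x i

/-- The monotonicity behavior of `F` is consistent with `u`: there is a partition of the
index set into `ζ_+` (where `ζ = true`) and `ζ_-` (where `ζ = false`) such that `u` is
nonnegative on `ζ_+`, nonpositive on `ζ_-`, and on the positive orthant all partial
derivatives `∂F_j/∂x_k` are nonnegative when `j, k` lie in the same set of the partition
and nonpositive otherwise. -/
def MonoConsistent {N : ℕ} (F : (Fin N → ℝ) → (Fin N → ℝ)) (u : Fin N → ℝ) : Prop :=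
  ∃ ζ : Fin N → Bool,
    (∀ j, ζ j = true → 0 ≤ u j) ∧ (∀ j, ζ j = false → u j ≤ 0) ∧
    ∀ x ∈ PosOrth N, ∀ j k : Fin N,
      (ζ j = ζ k → 0 ≤ Jac F x j k) ∧ (ζ j ≠ ζ k → Jac F x j k ≤ 0)

/-!
Differentiating the scaling law at `c = 1` gives Euler's identity `J(x) (u x) = u F(x)`, so at the
fixed point `x*` the vector `u x*` is a fixed vector of `J(x*)`. Flipping the signs of the
coordinates in `ζ_-` makes every Jacobian nonnegative, and for an irreducible nonnegative matrix a
nonnegative fixed vector with one nonzero entry is strictly positive; hence every `u_j` is nonzero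
with the sign of its block.

Given another fixed point `y`, slide `c` until `z = c^u x*` touches `y` from the `σ`-signed side:
`σ (y - z) ≥ 0` with equality in some coordinate. By the fundamental theorem of calculus,
`y - z = F y - F z` is a fixed vector of the Jacobian averaged over the segment `[z, y]`, which is
again `σ`-nonnegative and irreducible (its pattern contains that of `J(z)`). So `y - z` is zero or
nowhere zero, and therefore zero.
-/

open Matrix

lemma posOrth_eq_pi (N : ℕ) : PosOrth N = Set.univ.pi fun _ => Set.Ioi 0 := by
  ext x; simp [PosOrth]

lemma isOpen_posOrth (N : ℕ) : IsOpen (PosOrth N) := by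
  rw [posOrth_eq_pi]; exact isOpen_set_pi Set.finite_univ fun _ _ => isOpen_Ioi

lemma convex_posOrth (N : ℕ) : Convex ℝ (PosOrth N) := by
  rw [posOrth_eq_pi]; exact convex_pi fun _ _ => convex_Ioi 0

lemma pscale_mem_posOrth {N : ℕ} {c : ℝ} (hc : 0 < c) (u : Fin N → ℝ) {x : Fin N → ℝ}
    (hx : x ∈ PosOrth N) : pscale c u x ∈ PosOrth N :=
  fun i => mul_pos (Real.rpow_pos_of_pos hc _) (hx i)

section Irreducible

variable {N : ℕ}

lemma MatIrred.mono {M M' : Matrix (Fin N) (Fin N) ℝ} (hM : MatIrred M)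
    (h : ∀ j k, M j k ≠ 0 → M' j k ≠ 0) : MatIrred M' :=
  fun a b => Relation.TransGen.mono (fun k j => h j k) a b (hM a b)

lemma MatIrred.pos_of_mulVec_le {M : Matrix (Fin N) (Fin N) ℝ} (hM : MatIrred M)
    (hM0 : ∀ j k, 0 ≤ M j k) {w : Fin N → ℝ} (hw : 0 ≤ w) (hMw : M *ᵥ w ≤ w) {b : Fin N}
    (hb : 0 < w b) (a : Fin N) : 0 < w a := by
  have step : ∀ k j, M j k ≠ 0 → 0 < w k → 0 < w j := fun k j hjk hk =>
    calc 0 < M j k * w k := mul_pos ((hM0 j k).lt_of_ne' hjk) hk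
      _ ≤ (M *ᵥ w) j :=
        Finset.single_le_sum (f := fun i => M j i * w i)
          (fun i _ => mul_nonneg (hM0 j i) (hw i)) (Finset.mem_univ k)
      _ ≤ w j := hMw j
  induction hM b a with
  | single e => exact step _ _ e hb
  | tail _ e ih => exact step _ _ e ih

lemma MatIrred.signed_pos_of_mulVec_eq {σ : Fin N → ℝ} (hσ : ∀ j, σ j * σ j = 1)
    {A : Matrix (Fin N) (Fin N) ℝ} (hA : MatIrred A) (hA0 : ∀ j k, 0 ≤ σ j * A j k * σ k)
    {w : Fin N → ℝ} (hw : ∀ j, 0 ≤ σ j * w j) (hAw : A *ᵥ w = w) {b : Fin N}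
    (hb : σ b * w b ≠ 0) (a : Fin N) : 0 < σ a * w a := by
  set M : Matrix (Fin N) (Fin N) ℝ := Matrix.of fun j k => σ j * A j k * σ k
  have hσ0 : ∀ j, σ j ≠ 0 := fun j => left_ne_zero_of_mul_eq_one (hσ j)
  have hM : MatIrred M := hA.mono fun j k hjk => by simp [M, hjk, hσ0]
  have hMw : M *ᵥ (fun j => σ j * w j) = fun j => σ j * w j := by
    ext j
    rw [← congrFun hAw j]
    simp only [mulVec, dotProduct, M, Matrix.of_apply, Finset.mul_sum]
    refine Finset.sum_congr rfl fun k _ => ?_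
    linear_combination (σ j * A j k * w k) * hσ k
  exact hM.pos_of_mulVec_le hA0 hw hMw.le ((hw b).lt_of_ne' hb) a

lemma MatIrred.signed_mul_pos_of_mulVec_mul_eq {σ : Fin N → ℝ} (hσ : ∀ j, σ j * σ j = 1)
    {A : Matrix (Fin N) (Fin N) ℝ} (hA : MatIrred A) (hA0 : ∀ j k, 0 ≤ σ j * A j k * σ k)
    {u x : Fin N → ℝ} (hx : x ∈ PosOrth N) (hσu : ∀ j, 0 ≤ σ j * u j) (hu : u ≠ 0)
    (hAu : A *ᵥ (u * x) = u * x) (j : Fin N) : 0 < σ j * u j := by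
  obtain ⟨b, hb⟩ : ∃ b, u b ≠ 0 := Function.ne_iff.1 hu
  have hw : ∀ k, 0 ≤ σ k * (u * x) k := fun k => by
    simpa [mul_assoc] using mul_nonneg (hσu k) (hx k).le
  have hpos := hA.signed_pos_of_mulVec_eq hσ hA0 hw hAu (b := b)
    (mul_ne_zero (left_ne_zero_of_mul_eq_one (hσ b)) (mul_ne_zero hb (hx b).ne')) j
  exact (pos_iff_pos_of_mul_pos (by simpa [mul_assoc] using hpos)).mpr (hx j)

end Irreducible

section Jacobian

variable {N : ℕ} {F : (Fin N → ℝ) → (Fin N → ℝ)}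

lemma fderiv_apply_eq_jac_mulVec (x w : Fin N → ℝ) : fderiv ℝ F x w = Jac F x *ᵥ w := by
  have hw : w = ∑ k, w k • (Pi.single k 1 : Fin N → ℝ) := by ext i; simp [Pi.single_apply]
  ext j
  conv_lhs => rw [hw]
  simp [mulVec, dotProduct, Jac, Finset.sum_apply, mul_comm]

lemma ContDiffOn.continuousOn_jac {s : Set (Fin N → ℝ)} (hF : ContDiffOn ℝ 1 F s)
    (hs : IsOpen s) : ContinuousOn (Jac F) s := by
  have hentry : Continuous fun A : (Fin N → ℝ) →L[ℝ] (Fin N → ℝ) =>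
      (Matrix.of fun j k => A (Pi.single k 1) j : Matrix (Fin N) (Fin N) ℝ) :=
    continuous_pi fun j => continuous_pi fun k =>
      (continuous_apply j).comp (ContinuousLinearMap.apply ℝ _ (Pi.single k 1)).continuous
  exact hentry.comp_continuousOn (hF.continuousOn_fderiv_of_isOpen hs le_rfl)

lemma hasDerivAt_pscale_one (u x : Fin N → ℝ) :
    HasDerivAt (fun c => pscale c u x) (u * x) 1 := by
  rw [hasDerivAt_pi]
  intro i
  simpa [pscale] using
    (Real.hasDerivAt_rpow_const (x := 1) (p := u i) (Or.inl one_ne_zero)).mul_const (x i)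

/-- Euler's identity: differentiate `c ↦ F (c^u x)` at `c = 1`. -/
lemma jac_mulVec_mul_eq {u x : Fin N → ℝ} (hF : DifferentiableAt ℝ F x)
    (hscale : ∀ c : ℝ, 0 < c → F (pscale c u x) = pscale c u (F x)) :
    Jac F x *ᵥ (u * x) = u * F x := by
  have hpscale : pscale 1 u x = x := funext fun i => by simp [pscale]
  have hF' : HasFDerivAt F (fderiv ℝ F x) (pscale 1 u x) := by
    rw [hpscale]; exact hF.hasFDerivAt
  have hcomp : HasDerivAt (fun c => F (pscale c u x)) (fderiv ℝ F x (u * x)) 1 :=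
    hF'.comp_hasDerivAt 1 (hasDerivAt_pscale_one u x)
  have hscale' : (fun c => pscale c u (F x)) =ᶠ[nhds 1] fun c => F (pscale c u x) := by
    filter_upwards [eventually_gt_nhds one_pos] with c hc
    exact (hscale c hc).symm
  rw [← fderiv_apply_eq_jac_mulVec]
  exact (hcomp.congr_of_eventuallyEq hscale').unique (hasDerivAt_pscale_one u (F x))

end Jacobian

section MeanJacobian

variable {N : ℕ} {F : (Fin N → ℝ) → (Fin N → ℝ)} {s : Set (Fin N → ℝ)} {y z : Fin N → ℝ}

noncomputable def meanJac (F : (Fin N → ℝ) → (Fin N → ℝ)) (z y : Fin N → ℝ) :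
    Matrix (Fin N) (Fin N) ℝ :=
  Matrix.of fun j k => ∫ t in (0 : ℝ)..1, Jac F (z + t • (y - z)) j k

lemma ContDiffOn.continuousOn_jac_segment (hF : ContDiffOn ℝ 1 F s) (hs : IsOpen s)
    (hconv : Convex ℝ s) (hz : z ∈ s) (hy : y ∈ s) (j k : Fin N) :
    ContinuousOn (fun t : ℝ => Jac F (z + t • (y - z)) j k) (Set.uIcc 0 1) := by
  have hseg : Set.MapsTo (fun t : ℝ => z + t • (y - z)) (Set.uIcc 0 1) s := fun t ht =>
    hconv.add_smul_sub_mem hz hy (by rwa [Set.uIcc_of_le zero_le_one] at ht)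
  exact ((continuous_apply k).comp (continuous_apply j)).comp_continuousOn
    ((hF.continuousOn_jac hs).comp (by fun_prop) hseg)

lemma sub_eq_meanJac_mulVec (hF : ContDiffOn ℝ 1 F s) (hs : IsOpen s) (hconv : Convex ℝ s)
    (hz : z ∈ s) (hy : y ∈ s) : F y - F z = meanJac F z y *ᵥ (y - z) := by
  ext j
  have hderiv : ∀ t ∈ Set.uIcc (0 : ℝ) 1, HasDerivAt (fun t : ℝ => F (z + t • (y - z)) j)
      ((Jac F (z + t • (y - z)) *ᵥ (y - z)) j) t := by
    intro t ht
    rw [Set.uIcc_of_le zero_le_one] at ht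
    have hd : DifferentiableAt ℝ F (z + t • (y - z)) :=
      (hF.differentiableOn one_ne_zero).differentiableAt
        (hs.mem_nhds (hconv.add_smul_sub_mem hz hy ht))
    have hseg : HasDerivAt (fun t : ℝ => z + t • (y - z)) (y - z) t := by
      simpa using ((hasDerivAt_id t).smul_const (y - z)).const_add z
    rw [← fderiv_apply_eq_jac_mulVec]
    exact hasDerivAt_pi.1 (hd.hasFDerivAt.comp_hasDerivAt t hseg) j
  have hcont : ∀ k, ContinuousOn (fun t : ℝ => Jac F (z + t • (y - z)) j k * (y - z) k)
      (Set.uIcc 0 1) := fun k =>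
    (hF.continuousOn_jac_segment hs hconv hz hy j k).mul continuousOn_const
  have hftc := intervalIntegral.integral_eq_sub_of_hasDerivAt hderiv
    (continuousOn_finsetSum Finset.univ fun k _ => hcont k).intervalIntegrable
  simp only [one_smul, zero_smul, add_zero, add_sub_cancel] at hftc
  rw [Pi.sub_apply, ← hftc]
  simp only [mulVec, dotProduct, meanJac, Matrix.of_apply]
  rw [intervalIntegral.integral_finsetSum fun k _ => (hcont k).intervalIntegrable]
  simp only [intervalIntegral.integral_mul_const]

section Signed

variable {σ : Fin N → ℝ}

lemma meanJac_signed_nonneg (hsign : ∀ x ∈ s, ∀ j k, 0 ≤ σ j * Jac F x j k * σ k)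
    (hconv : Convex ℝ s) (hz : z ∈ s) (hy : y ∈ s) (j k : Fin N) :
    0 ≤ σ j * meanJac F z y j k * σ k := by
  simp only [meanJac, Matrix.of_apply, ← intervalIntegral.integral_const_mul,
    ← intervalIntegral.integral_mul_const]
  exact intervalIntegral.integral_nonneg zero_le_one fun t ht =>
    hsign _ (hconv.add_smul_sub_mem hz hy ht) j k

/-- The signed integrand is continuous, nonnegative, and positive at the endpoint `z`. -/
lemma meanJac_ne_zero (hsign : ∀ x ∈ s, ∀ j k, 0 ≤ σ j * Jac F x j k * σ k)
    (hF : ContDiffOn ℝ 1 F s) (hs : IsOpen s) (hconv : Convex ℝ s) (hz : z ∈ s) (hy : y ∈ s)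
    {j k : Fin N} (hσj : σ j ≠ 0) (hσk : σ k ≠ 0)
    (hjk : Jac F z j k ≠ 0) : meanJac F z y j k ≠ 0 := by
  have hpos : 0 < σ j * meanJac F z y j k * σ k := by
    simp only [meanJac, Matrix.of_apply, ← intervalIntegral.integral_const_mul,
      ← intervalIntegral.integral_mul_const]
    refine intervalIntegral.integral_zero.symm.trans_lt
      (intervalIntegral.integral_lt_integral_of_continuousOn_of_le_of_exists_lt zero_lt_one
        continuousOn_const ?_ (fun t ht => hsign _ ?_ j k) ⟨0, by simp, ?_⟩)
    · rw [← Set.uIcc_of_le zero_le_one]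
      exact (continuousOn_const.mul (hF.continuousOn_jac_segment hs hconv hz hy j k)).mul
        continuousOn_const
    · exact hconv.add_smul_sub_mem hz hy (Set.Ioc_subset_Icc_self ht)
    · simpa using (hsign z hz j k).lt_of_ne' (by simp [hσj, hσk, hjk])
  intro h
  simp [h] at hpos

/-- `y - z` is a `σ`-nonnegative fixed vector of the irreducible mean Jacobian, so it is either
zero or nowhere zero. -/
lemma eq_of_signed_le_of_isFixedPt (hsign : ∀ x ∈ s, ∀ j k, 0 ≤ σ j * Jac F x j k * σ k)
    (hσ : ∀ j, σ j * σ j = 1) (hF : ContDiffOn ℝ 1 F s) (hs : IsOpen s) (hconv : Convex ℝ s)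
    (hz : z ∈ s) (hy : y ∈ s) (hirr : MatIrred (Jac F z)) (hFz : F z = z) (hFy : F y = y)
    (hle : ∀ j, 0 ≤ σ j * (y - z) j) {j₀ : Fin N} (hj₀ : y j₀ = z j₀) : y = z := by
  by_contra hne
  obtain ⟨b, hb⟩ := Function.ne_iff.1 hne
  have hσ0 : ∀ j, σ j ≠ 0 := fun j => left_ne_zero_of_mul_eq_one (hσ j)
  have hmean : meanJac F z y *ᵥ (y - z) = y - z := by
    rw [← sub_eq_meanJac_mulVec hF hs hconv hz hy, hFy, hFz]
  have hirr' : MatIrred (meanJac F z y) :=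
    hirr.mono fun j k => meanJac_ne_zero hsign hF hs hconv hz hy (hσ0 j) (hσ0 k)
  have hpos := hirr'.signed_pos_of_mulVec_eq hσ (meanJac_signed_nonneg hsign hconv hz hy) hle
    hmean (b := b) (mul_ne_zero (hσ0 b) (sub_ne_zero.2 hb)) j₀
  simp [hj₀] at hpos

end Signed

end MeanJacobian

lemma mul_exp_mul_sub_exp_mul_nonneg {u a b : ℝ} (hab : b ≤ a) :
    0 ≤ u * (Real.exp (a * u) - Real.exp (b * u)) := by
  rcases le_total 0 u with hu | hu
  · exact mul_nonneg hu (sub_nonneg.2 (Real.exp_le_exp.2 (mul_le_mul_of_nonneg_right hab hu)))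
  · exact mul_nonneg_of_nonpos_of_nonpos hu
      (sub_nonpos.2 (Real.exp_le_exp.2 (mul_le_mul_of_nonpos_right hab hu)))

/-- Slide `c^u x` until it touches `y`: `c = exp (min_j log (y_j / x_j) / u_j)`. -/
lemma exists_pscale_touch {N : ℕ} [Nonempty (Fin N)] {u x y : Fin N → ℝ} (hu : ∀ j, u j ≠ 0)
    (hx : x ∈ PosOrth N) (hy : y ∈ PosOrth N) :
    ∃ c, 0 < c ∧ (∀ j, 0 ≤ u j * (y j - pscale c u x j)) ∧ ∃ j₀, y j₀ = pscale c u x j₀ := by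
  set s : Fin N → ℝ := fun j => Real.log (y j / x j) / u j
  obtain ⟨j₀, -, hj₀⟩ := Finset.exists_min_image Finset.univ s Finset.univ_nonempty
  have hpscale : ∀ j, pscale (Real.exp (s j₀)) u x j = Real.exp (s j₀ * u j) * x j := fun j => by
    rw [pscale, Real.rpow_def_of_pos (Real.exp_pos _), Real.log_exp]
  have hy_eq : ∀ j, y j = Real.exp (s j * u j) * x j := fun j => by
    rw [div_mul_cancel₀ _ (hu j), Real.exp_log (div_pos (hy j) (hx j)),
      div_mul_cancel₀ _ (hx j).ne']
  refine ⟨Real.exp (s j₀), Real.exp_pos _, fun j => ?_, j₀, by rw [hpscale, ← hy_eq]⟩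
  rw [hpscale, hy_eq, ← sub_mul, ← mul_assoc]
  exact mul_nonneg (mul_exp_mul_sub_exp_mul_nonneg (hj₀ j (Finset.mem_univ j))) (hx j).le

lemma MonoConsistent.exists_sign {N : ℕ} {F : (Fin N → ℝ) → (Fin N → ℝ)} {u : Fin N → ℝ}
    (h : MonoConsistent F u) :
    ∃ σ : Fin N → ℝ, (∀ j, σ j * σ j = 1) ∧ (∀ j, 0 ≤ σ j * u j) ∧
      ∀ x ∈ PosOrth N, ∀ j k, 0 ≤ σ j * Jac F x j k * σ k := by
  obtain ⟨ζ, hplus, hminus, hjac⟩ := h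
  refine ⟨fun j => if ζ j then 1 else -1, fun j => by dsimp only; split_ifs <;> norm_num,
    fun j => ?_, fun x hx j k => ?_⟩
  · cases hj : ζ j
    · simpa [hj] using hminus j hj
    · simpa [hj] using hplus j hj
  · have := hjac x hx j k
    cases hj : ζ j <;> cases hk : ζ k <;> simp_all

theorem uniqueness_up_to_scale_general
    {N : ℕ} (u : Fin N → ℝ) (hu : u ≠ 0)
    (F : (Fin N → ℝ) → (Fin N → ℝ))
    (hC1 : ContDiffOn ℝ 1 F (PosOrth N))
    (hconn : ∀ x ∈ PosOrth N, MatIrred (Matrix.of fun j k => |Jac F x j k|))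
    (hscale : ∀ x ∈ PosOrth N, ∀ c : ℝ, 0 < c → F (pscale c u x) = pscale c u (F x))
    (hmono : MonoConsistent F u)
    (xstar : Fin N → ℝ) (hxstar : xstar ∈ PosOrth N) (hfix : F xstar = xstar) :
    {x | x ∈ PosOrth N ∧ F x = x} =
      {x | ∃ c : ℝ, 0 < c ∧ x = pscale c u xstar} := by
  obtain ⟨σ, hσ, hσu, hsign⟩ := hmono.exists_sign
  have hirr : ∀ x ∈ PosOrth N, MatIrred (Jac F x) := fun x hx =>
    (hconn x hx).mono fun j k h => by simpa using h
  have hfixed : ∀ c : ℝ, 0 < c → F (pscale c u xstar) = pscale c u xstar := fun c hc => by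
    rw [hscale xstar hxstar c hc, hfix]
  have heuler : Jac F xstar *ᵥ (u * xstar) = u * xstar := by
    simpa [hfix] using jac_mulVec_mul_eq ((hC1.differentiableOn one_ne_zero).differentiableAt
      ((isOpen_posOrth N).mem_nhds hxstar)) (hscale xstar hxstar)
  have hσu_pos := (hirr xstar hxstar).signed_mul_pos_of_mulVec_mul_eq hσ (hsign xstar hxstar)
    hxstar hσu hu heuler
  ext y
  constructor
  · rintro ⟨hy, hFy⟩
    have : Nonempty (Fin N) := (Function.ne_iff.1 hu).elim fun b _ => ⟨b⟩
    obtain ⟨c, hc, hle, j₀, hj₀⟩ :=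
      exists_pscale_touch (fun j => right_ne_zero_of_mul (hσu_pos j).ne') hxstar hy
    have hz := pscale_mem_posOrth hc u hxstar
    refine ⟨c, hc, eq_of_signed_le_of_isFixedPt hsign hσ hC1 (isOpen_posOrth N)
      (convex_posOrth N) hz hy (hirr _ hz) (hfixed c hc) hFy (fun j => ?_) hj₀⟩
    refine nonneg_of_mul_nonneg_right ?_ (hσu_pos j)
    rw [Pi.sub_apply]
    linear_combination hle j - (u j * (y j - pscale c u xstar j)) * hσ j
  · rintro ⟨c, hc, rfl⟩
    exact ⟨pscale_mem_posOrth hc u hxstar, hfixed c hc⟩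

/-- **Main theorem, part (i) (up-to-scale uniqueness).**
If `F : ℝ^N_{++} → ℝ^N_{++}` is continuously differentiable, connects all variables,
scales with exponent `u ≠ 0`, its monotonicity behavior is consistent with `u`, and the
fixed point equation `x = F(x)` has a solution `x* ∈ ℝ^N_{++}`, then the solutions of
`x = F(x)` in `ℝ^N_{++}` are exactly the vectors `c^u x*` for `c ∈ (0, ∞)`. -/
theorem uniqueness_up_to_scale
    {N : ℕ} (hN : 1 ≤ N) (u : Fin N → ℝ) (hu : u ≠ 0)
    (F : (Fin N → ℝ) → (Fin N → ℝ))
    (hmap : ∀ x ∈ PosOrth N, F x ∈ PosOrth N)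
    (hC1 : ContDiffOn ℝ 1 F (PosOrth N))
    (hconn : ∀ x ∈ PosOrth N, MatIrred (Matrix.of fun j k => |Jac F x j k|))
    (hscale : ∀ x ∈ PosOrth N, ∀ c : ℝ, 0 < c → F (pscale c u x) = pscale c u (F x))
    (hmono : MonoConsistent F u)
    (xstar : Fin N → ℝ) (hxstar : xstar ∈ PosOrth N) (hfix : F xstar = xstar) :
    {x | x ∈ PosOrth N ∧ F x = x} =
      {x | ∃ c : ℝ, 0 < c ∧ x = pscale c u xstar} :=
  uniqueness_up_to_scale_general u hu F hC1 hconn hscale hmono xstar hxstar hfix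
end

section
/- Let A, B ∈ ℝ^{N×N} with |A| ≤ B entrywise, assume B is irreducible, and let u ∈ ℝ^N be a nonzero vector with Au = u. Then the following assertions are equivalent: (i) the spectral radius of B equals 1; (ii) B|u| = |u|; (iii) there exists a nonzero entrywise nonnegative vector v ∈ ℝ^N with Bv = v. -/
/-!
Write `y = |u|`; from `Au = u` and `|A| ≤ B` we get `y ≤ By`.

If `B` has a nonnegative fixed vector `v ≠ 0`, irreducibility makes `v` strictly positive, since
some `(1 + B)ᵏ v = 2ᵏ v` is positive. Comparing an eigenvector `x` with the least multiple `t v`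
dominating `|x|` shows that every eigenvalue has modulus at most `1`, and `1` is an eigenvalue,
so `ρ(B) = 1`.

Conversely, if `ρ(B) = 1` but `By ≠ y`, then for large `k` the vector `z = (1 + B)ᵏ y` satisfies
`Bz - z = (1 + B)ᵏ (By - y) > 0`, hence `Bz ≥ c z` for some `c > 1`. Then `‖Bᵐ‖ ≥ cᵐ` for all `m`,
and Gelfand's formula produces an eigenvalue of modulus at least `c > 1`, a contradiction.
-/

open Filter

/-- The spectral radius of a real matrix: the maximum of the absolute values of its
complex eigenvalues. -/
noncomputable def specRad {N : ℕ} (M : Matrix (Fin N) (Fin N) ℝ) : ℝ :=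
  sSup ((fun z : ℂ => ‖z‖) '' spectrum ℂ (M.map Complex.ofReal))

open Matrix Topology NNReal

theorem exists_one_lt_mul_le {ι : Type*} [Finite ι] {a b : ι → ℝ} (h : ∀ i, a i < b i) :
    ∃ c > 1, ∀ i, c * a i ≤ b i := by
  have hev : ∀ᶠ c in 𝓝[>] (1 : ℝ), ∀ i, c * a i < b i :=
    nhdsWithin_le_nhds <| eventually_all.2 fun i =>
      (continuousAt_id.mul continuousAt_const).eventually_lt continuousAt_const (by simpa using h i)
  obtain ⟨c, hc, hc1⟩ := (hev.and self_mem_nhdsWithin).exists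
  exact ⟨c, hc1, fun i => (hc i).le⟩

theorem spectrum.exists_le_norm_of_pow_le {A : Type*} [NormedRing A] [NormedAlgebra ℂ A]
    [CompleteSpace A] [Nontrivial A] (a : A) {c : ℝ} (hc : 0 ≤ c) (h : ∀ k : ℕ, c ^ k ≤ ‖a ^ k‖) :
    ∃ μ ∈ spectrum ℂ a, c ≤ ‖μ‖ := by
  lift c to ℝ≥0 using hc
  obtain ⟨μ, hμ, hr⟩ := spectrum.exists_nnnorm_eq_spectralRadius a
  refine ⟨μ, hμ, ?_⟩
  suffices (c : ENNReal) ≤ ‖μ‖₊ by exact_mod_cast this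
  rw [hr]
  refine ge_of_tendsto (spectrum.pow_nnnorm_pow_one_div_tendsto_nhds_spectralRadius a) ?_
  filter_upwards [eventually_ne_atTop 0] with k hk
  calc (c : ENNReal) = ((c : ENNReal) ^ k) ^ (1 / k : ℝ) := by
        rw [← ENNReal.rpow_natCast, ← ENNReal.rpow_mul, mul_one_div_cancel (by exact_mod_cast hk),
          ENNReal.rpow_one]
    _ ≤ (‖a ^ k‖₊ : ENNReal) ^ (1 / k : ℝ) := by
        gcongr
        exact_mod_cast h k

namespace Matrix

theorem mem_spectrum_iff_exists_mulVec_eq_smul {K n : Type*} [Field K] [Fintype n]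
    [DecidableEq n] (M : Matrix n n K) (μ : K) :
    μ ∈ spectrum K M ↔ ∃ x ≠ 0, M *ᵥ x = μ • x := by
  rw [spectrum.mem_iff, isUnit_iff_isUnit_det, isUnit_iff_ne_zero, not_not,
    ← exists_mulVec_eq_zero_iff]
  simp only [sub_mulVec, Algebra.algebraMap_eq_smul_one, smul_mulVec, one_mulVec, sub_eq_zero,
    eq_comm]

theorem map_ofReal_mulVec {m n : Type*} [Fintype n] (M : Matrix m n ℝ) (v : n → ℝ) :
    M.map Complex.ofReal *ᵥ (Complex.ofReal ∘ v) = Complex.ofReal ∘ (M *ᵥ v) :=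
  funext fun i => (RingHom.map_mulVec Complex.ofRealHom M v i).symm

theorem map_ofReal_pow {n : Type*} [Fintype n] [DecidableEq n] (M : Matrix n n ℝ) (k : ℕ) :
    M.map Complex.ofReal ^ k = (M ^ k).map Complex.ofReal :=
  (map_pow Complex.ofRealHom.mapMatrix M k).symm

section Nonneg

variable {m n : Type*} [Fintype n] {B : Matrix m n ℝ}

theorem mulVec_mono_of_nonneg (hB : ∀ i j, 0 ≤ B i j) {x y : n → ℝ} (h : x ≤ y) :
    B *ᵥ x ≤ B *ᵥ y :=
  fun i => Finset.sum_le_sum fun k _ => mul_le_mul_of_nonneg_left (h k) (hB i k)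

theorem mulVec_nonneg_of_nonneg (hB : ∀ i j, 0 ≤ B i j) {x : n → ℝ} (hx : 0 ≤ x) :
    0 ≤ B *ᵥ x := by
  simpa using mulVec_mono_of_nonneg hB hx

theorem norm_mulVec_apply_le {𝕜 : Type*} [SeminormedRing 𝕜] {A : Matrix m n 𝕜}
    (hAB : ∀ i j, ‖A i j‖ ≤ B i j) (x : n → 𝕜) (i : m) :
    ‖(A *ᵥ x) i‖ ≤ (B *ᵥ fun k => ‖x k‖) i :=
  calc ‖∑ k, A i k * x k‖ ≤ ∑ k, ‖A i k‖ * ‖x k‖ := norm_sum_le_of_le _ fun _ _ => norm_mul_le _ _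
    _ ≤ ∑ k, B i k * ‖x k‖ :=
      Finset.sum_le_sum fun k _ => mul_le_mul_of_nonneg_right (hAB i k) (norm_nonneg _)

end Nonneg

section Square

variable {n : Type*} [Fintype n] [DecidableEq n] {B : Matrix n n ℝ}

theorem pow_smul_le_pow_mulVec (hB : ∀ i j, 0 ≤ B i j) {c : ℝ} (hc : 0 ≤ c)
    {z : n → ℝ} (hz : c • z ≤ B *ᵥ z) (k : ℕ) : c ^ k • z ≤ (B ^ k) *ᵥ z := by
  induction k with
  | zero => simp
  | succ k ih =>
    calc c ^ (k + 1) • z = c ^ k • c • z := by rw [pow_succ, mul_smul]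
      _ ≤ c ^ k • (B *ᵥ z) := smul_le_smul_of_nonneg_left hz (pow_nonneg hc k)
      _ = B *ᵥ (c ^ k • z) := (mulVec_smul B _ z).symm
      _ ≤ B *ᵥ ((B ^ k) *ᵥ z) := mulVec_mono_of_nonneg hB ih
      _ = (B ^ (k + 1)) *ᵥ z := by rw [mulVec_mulVec, pow_succ']

theorem one_add_pow_mulVec_nonneg (hB : ∀ i j, 0 ≤ B i j) {x : n → ℝ} (hx : 0 ≤ x) (k : ℕ) :
    0 ≤ (1 + B) ^ k *ᵥ x := by
  induction k with
  | zero => simpa using hx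
  | succ k ih =>
    rw [pow_succ', ← mulVec_mulVec, add_mulVec, one_mulVec]
    exact add_nonneg ih (mulVec_nonneg_of_nonneg hB ih)

theorem monotone_one_add_pow_mulVec (hB : ∀ i j, 0 ≤ B i j) {x : n → ℝ} (hx : 0 ≤ x) :
    Monotone fun k : ℕ => (1 + B) ^ k *ᵥ x := by
  refine monotone_nat_of_le_succ fun k => ?_
  rw [pow_succ', ← mulVec_mulVec, add_mulVec, one_mulVec]
  exact le_add_of_nonneg_right (mulVec_nonneg_of_nonneg hB (one_add_pow_mulVec_nonneg hB hx k))

theorem one_add_pow_mulVec_of_mulVec_eq_self {v : n → ℝ} (hv : B *ᵥ v = v) (k : ℕ) :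
    (1 + B) ^ k *ᵥ v = (2 : ℝ) ^ k • v := by
  induction k with
  | zero => simp
  | succ k ih =>
    rw [pow_succ', ← mulVec_mulVec, ih, mulVec_smul, add_mulVec, one_mulVec, hv, pow_succ',
      mul_smul, two_smul, smul_add]

theorem one_add_mulVec_apply_pos (hB : ∀ i j, 0 ≤ B i j) {y : n → ℝ} (hy : 0 ≤ y) {i j : n}
    (hji : B j i ≠ 0) (hi : 0 < y i) : 0 < ((1 + B) *ᵥ y) j := by
  have hterm : 0 < B j i * y i := mul_pos ((hB j i).lt_of_ne' hji) hi
  have hsum : B j i * y i ≤ (B *ᵥ y) j :=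
    Finset.single_le_sum (f := fun k => B j k * y k) (fun k _ => mul_nonneg (hB j k) (hy k))
      (Finset.mem_univ i)
  rw [add_mulVec, one_mulVec, Pi.add_apply]
  linarith [show 0 ≤ y j from hy j]

theorem one_mem_spectrum_map_ofReal {v : n → ℝ} (hv0 : v ≠ 0) (hBv : B *ᵥ v = v) :
    (1 : ℂ) ∈ spectrum ℂ (B.map Complex.ofReal) := by
  refine (mem_spectrum_iff_exists_mulVec_eq_smul _ _).2 ⟨Complex.ofReal ∘ v, ?_, ?_⟩
  · exact fun h => hv0 (funext fun i => by simpa using congrFun h i)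
  · ext i
    simpa [hBv] using congrFun (map_ofReal_mulVec B v) i

theorem norm_le_one_of_mem_spectrum_map_ofReal (hB : ∀ i j, 0 ≤ B i j) {v : n → ℝ}
    (hv : ∀ i, 0 < v i) (hBv : B *ᵥ v ≤ v) {μ : ℂ}
    (hμ : μ ∈ spectrum ℂ (B.map Complex.ofReal)) : ‖μ‖ ≤ 1 := by
  obtain ⟨x, hx0, hx⟩ := (mem_spectrum_iff_exists_mulVec_eq_smul _ _).1 hμ
  obtain ⟨k, hk⟩ := Function.ne_iff.1 hx0
  have : Nonempty n := ⟨k⟩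
  obtain ⟨i, hi⟩ := Finite.exists_max fun j => ‖x j‖ / v j
  set t := ‖x i‖ / v i
  have hxt : (fun j => ‖x j‖) ≤ t • v := fun j => (div_le_iff₀ (hv j)).1 (hi j)
  have hxi : 0 < ‖x i‖ :=
    (div_pos_iff_of_pos_right (hv i)).1 <| (div_pos (norm_pos_iff.2 hk) (hv k)).trans_le (hi k)
  refine (mul_le_iff_le_one_left hxi).1 ?_
  calc ‖μ‖ * ‖x i‖ = ‖(B.map Complex.ofReal *ᵥ x) i‖ := by simp [hx]
    _ ≤ (B *ᵥ fun j => ‖x j‖) i :=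
      norm_mulVec_apply_le (fun i j => by simp [abs_of_nonneg (hB i j)]) x i
    _ ≤ (B *ᵥ (t • v)) i := mulVec_mono_of_nonneg hB hxt i
    _ = t * (B *ᵥ v) i := by rw [mulVec_smul, Pi.smul_apply, smul_eq_mul]
    _ ≤ t * v i := mul_le_mul_of_nonneg_left (hBv i) (div_nonneg hxi.le (hv i).le)
    _ = ‖x i‖ := div_mul_cancel₀ _ (hv i).ne'

-- Gelfand's formula needs some Banach-algebra norm on complex matrices; any one will do.
attribute [local instance] Matrix.linftyOpNormedRing Matrix.linftyOpNormedAlgebra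

theorem exists_mem_spectrum_map_ofReal_le_norm (hB : ∀ i j, 0 ≤ B i j) {c : ℝ} (hc : 0 ≤ c)
    {z : n → ℝ} (hz : 0 ≤ z) (hz0 : z ≠ 0) (hcz : c • z ≤ B *ᵥ z) :
    ∃ μ ∈ spectrum ℂ (B.map Complex.ofReal), c ≤ ‖μ‖ := by
  obtain ⟨k, hk⟩ := Function.ne_iff.1 hz0
  have : Nonempty n := ⟨k⟩
  obtain ⟨i, hi⟩ := Finite.exists_max z
  have hzi : 0 < z i := ((hz k).lt_of_ne' hk).trans_le (hi k)
  refine spectrum.exists_le_norm_of_pow_le _ hc fun m => le_of_mul_le_mul_right ?_ hzi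
  calc c ^ m * z i ≤ ((B ^ m) *ᵥ z) i := pow_smul_le_pow_mulVec hB hc hcz m i
    _ ≤ |((B ^ m) *ᵥ z) i| := le_abs_self _
    _ = ‖((B.map Complex.ofReal) ^ m *ᵥ (Complex.ofReal ∘ z)) i‖ := by
      simp [map_ofReal_pow, map_ofReal_mulVec]
    _ ≤ ‖(B.map Complex.ofReal) ^ m *ᵥ (Complex.ofReal ∘ z)‖ := norm_le_pi_norm _ i
    _ ≤ ‖(B.map Complex.ofReal) ^ m‖ * ‖Complex.ofReal ∘ z‖ := linfty_opNorm_mulVec _ _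
    _ ≤ ‖(B.map Complex.ofReal) ^ m‖ * z i := by
      gcongr
      exact (pi_norm_le_iff_of_nonneg hzi.le).2 fun j => by simpa [abs_of_nonneg (hz j)] using hi j

end Square

end Matrix

theorem norm_le_specRad {N : ℕ} {B : Matrix (Fin N) (Fin N) ℝ} {μ : ℂ}
    (hμ : μ ∈ spectrum ℂ (B.map Complex.ofReal)) : ‖μ‖ ≤ specRad B :=
  le_csSup ((finite_spectrum _).image _).bddAbove ⟨μ, hμ, rfl⟩

namespace MatIrred

variable {N : ℕ} {B : Matrix (Fin N) (Fin N) ℝ}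

theorem exists_one_add_pow_mulVec_pos (hirr : MatIrred B) (hB : ∀ i j, 0 ≤ B i j)
    {x : Fin N → ℝ} (hx : 0 ≤ x) (hx0 : x ≠ 0) : ∃ k, ∀ i, 0 < ((1 + B) ^ k *ᵥ x) i := by
  obtain ⟨a, ha⟩ : ∃ a, 0 < x a := by
    by_contra! h
    exact hx0 (le_antisymm h hx)
  have hreach : ∀ b, Relation.ReflTransGen (fun k j => B j k ≠ 0) a b →
      ∃ k, 0 < ((1 + B) ^ k *ᵥ x) b := by
    intro b hab
    induction hab with
    | refl => exact ⟨0, by simpa using ha⟩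
    | tail _ hbc ih =>
      obtain ⟨k, hk⟩ := ih
      refine ⟨k + 1, ?_⟩
      rw [pow_succ', ← mulVec_mulVec]
      exact one_add_mulVec_apply_pos hB (one_add_pow_mulVec_nonneg hB hx k) hbc hk
  choose k hk using fun b => hreach b (hirr a b).to_reflTransGen
  exact ⟨Finset.univ.sup k, fun b => (hk b).trans_le <|
    monotone_one_add_pow_mulVec hB hx (Finset.le_sup (Finset.mem_univ b)) b⟩

theorem pos_of_mulVec_eq_self (hirr : MatIrred B) (hB : ∀ i j, 0 ≤ B i j) {v : Fin N → ℝ}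
    (hv : 0 ≤ v) (hv0 : v ≠ 0) (hBv : B *ᵥ v = v) (i : Fin N) : 0 < v i := by
  obtain ⟨k, hk⟩ := hirr.exists_one_add_pow_mulVec_pos hB hv hv0
  have hi := hk i
  rw [one_add_pow_mulVec_of_mulVec_eq_self hBv, Pi.smul_apply, smul_eq_mul] at hi
  exact pos_of_mul_pos_right hi (by positivity)

theorem specRad_eq_one_of_mulVec_eq_self (hirr : MatIrred B) (hB : ∀ i j, 0 ≤ B i j)
    {v : Fin N → ℝ} (hv : 0 ≤ v) (hv0 : v ≠ 0) (hBv : B *ᵥ v = v) : specRad B = 1 := by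
  have hpos := hirr.pos_of_mulVec_eq_self hB hv hv0 hBv
  have hone := one_mem_spectrum_map_ofReal hv0 hBv
  refine le_antisymm (csSup_le ⟨1, 1, hone, norm_one⟩ ?_) (by simpa using norm_le_specRad hone)
  exact Set.forall_mem_image.2 fun μ hμ => norm_le_one_of_mem_spectrum_map_ofReal hB hpos hBv.le hμ

theorem mulVec_eq_self_of_le_mulVec (hirr : MatIrred B) (hB : ∀ i j, 0 ≤ B i j)
    (hρ : specRad B = 1) {y : Fin N → ℝ} (hy : 0 ≤ y) (hyB : y ≤ B *ᵥ y) : B *ᵥ y = y := by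
  by_contra hne
  have hw0 : B *ᵥ y - y ≠ 0 := sub_ne_zero.2 hne
  obtain ⟨k, hk⟩ := hirr.exists_one_add_pow_mulVec_pos hB (sub_nonneg.2 hyB) hw0
  set z := (1 + B) ^ k *ᵥ y
  have hgap : ∀ i, z i < (B *ᵥ z) i := by
    have hcomm : B * (1 + B) ^ k = (1 + B) ^ k * B :=
      (((Commute.one_right B).add_right (Commute.refl B)).pow_right k).eq
    intro i
    have hki := hk i
    rwa [mulVec_sub, mulVec_mulVec, ← hcomm, ← mulVec_mulVec, Pi.sub_apply, sub_pos] at hki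
  have hz0 : z ≠ 0 := fun h => by
    obtain ⟨i, -⟩ := Function.ne_iff.1 hw0
    simpa [h] using hgap i
  obtain ⟨c, hc1, hc⟩ := exists_one_lt_mul_le hgap
  obtain ⟨μ, hμ, hcμ⟩ := exists_mem_spectrum_map_ofReal_le_norm hB (by linarith)
    (one_add_pow_mulVec_nonneg hB hy k) hz0 hc
  linarith [norm_le_specRad hμ]

end MatIrred

/-- **Domination of matrices (equivalences).** Let `|A| ≤ B` entrywise, `B` irreducible,
and `u ≠ 0` with `Au = u`. Then the following are equivalent:
(i) `ρ(B) = 1`; (ii) `B|u| = |u|`; (iii) there is a nonzero nonnegative `v` with `Bv = v`. -/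
theorem domination_equivalences
    {N : ℕ} (A B : Matrix (Fin N) (Fin N) ℝ)
    (hAB : ∀ j k, |A j k| ≤ B j k) (hB : MatIrred B)
    (u : Fin N → ℝ) (hu : u ≠ 0) (hAu : A.mulVec u = u) :
    [specRad B = 1,
     B.mulVec (fun i => |u i|) = (fun i => |u i|),
     ∃ v : Fin N → ℝ, v ≠ 0 ∧ (∀ i, 0 ≤ v i) ∧ B.mulVec v = v].TFAE := by
  have hB0 : ∀ j k, 0 ≤ B j k := fun j k => (abs_nonneg _).trans (hAB j k)
  have habs_ne : (fun i => |u i|) ≠ 0 := fun h => hu (funext fun i => abs_eq_zero.1 (congrFun h i))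
  have habs_le : (fun i => |u i|) ≤ B *ᵥ fun i => |u i| := fun i => by
    simpa [hAu] using norm_mulVec_apply_le hAB u i
  tfae_have 1 → 2 := fun hρ => hB.mulVec_eq_self_of_le_mulVec hB0 hρ (fun i => abs_nonneg _) habs_le
  tfae_have 2 → 3 := fun h => ⟨_, habs_ne, fun i => abs_nonneg _, h⟩
  tfae_have 3 → 1 := fun ⟨v, hv0, hv, hBv⟩ => hB.specRad_eq_one_of_mulVec_eq_self hB0 hv hv0 hBv
  tfae_finish
end

section
/- Let A, B ∈ ℝ^{N×N} with |A| ≤ B entrywise, assume B is irreducible, and let u ∈ ℝ^N be a nonzero vector with Au = u. If B|u| = |u|, then: |A| = B, every entry of u is nonzero, and, setting ζ_+ = { j : u_j > 0 } and ζ_- = { j : u_j < 0 }, one has for all j, k ∈ {1,…,N}: A_{jk} ≥ 0 if j and k both lie in ζ_+ or both lie in ζ_-, and A_{jk} ≤ 0 if j and k lie in different ones of the sets ζ_+, ζ_-. -/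
/-!
For each row `j`,
`|u j| = |∑ₖ A j k u k| ≤ ∑ₖ |A j k| |u k| ≤ ∑ₖ B j k |u k| = |u j|`,
so both inequalities are equalities. As the last sum has nonnegative terms, `u j = 0` and
`B j k ≠ 0` force `u k = 0`; by irreducibility the zero set of `u` is empty or everything, and
`u ≠ 0`. With all `|u k| > 0`, the second equality gives `|A j k| = B j k`, and the equality case
of the triangle inequality in the first one says every term `A j k u k` has the sign of `u j`.
-/

open Filter

open Matrix

theorem Finset.mul_sum_nonneg_of_abs_sum_eq_sum_abs {ι R : Type*} [Ring R] [LinearOrder R]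
    [IsStrictOrderedRing R] {s : Finset ι} {f : ι → R}
    (h : |∑ i ∈ s, f i| = ∑ i ∈ s, |f i|) {i : ι} (hi : i ∈ s) :
    0 ≤ f i * ∑ j ∈ s, f j := by
  rcases le_total 0 (∑ j ∈ s, f j) with hS | hS
  · rw [abs_of_nonneg hS] at h
    have hfi : f i = |f i| :=
      (Finset.sum_eq_sum_iff_of_le fun j _ => le_abs_self (f j)).1 h i hi
    exact mul_nonneg ((abs_nonneg (f i)).trans_eq hfi.symm) hS
  · rw [abs_of_nonpos hS, ← Finset.sum_neg_distrib] at h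
    have hfi : -f i = |f i| :=
      (Finset.sum_eq_sum_iff_of_le fun j _ => neg_le_abs (f j)).1 h i hi
    exact mul_nonneg_of_nonpos_of_nonpos
      (neg_nonneg.1 ((abs_nonneg (f i)).trans_eq hfi.symm)) hS

theorem Matrix.eq_zero_of_mulVec_le_of_apply_eq_zero {N : ℕ} {B : Matrix (Fin N) (Fin N) ℝ}
    (hB0 : ∀ j k, 0 ≤ B j k) {v : Fin N → ℝ} (hv0 : 0 ≤ v) (hBv : B *ᵥ v ≤ v)
    {j k : Fin N} (hj : v j = 0) (hk : B j k ≠ 0) : v k = 0 := by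
  have hterm_nonneg : ∀ i ∈ Finset.univ, 0 ≤ B j i * v i :=
    fun i _ => mul_nonneg (hB0 j i) (hv0 i)
  have hrow : ∑ i, B j i * v i = 0 :=
    le_antisymm ((hBv j).trans hj.le) (Finset.sum_nonneg hterm_nonneg)
  have hjk : B j k * v k = 0 :=
    (Finset.sum_eq_zero_iff_of_nonneg hterm_nonneg).1 hrow k (Finset.mem_univ k)
  exact (mul_eq_zero.1 hjk).resolve_left hk

theorem MatIrred.apply_ne_zero_of_mulVec_le {N : ℕ} {B : Matrix (Fin N) (Fin N) ℝ}
    (hB : MatIrred B) (hB0 : ∀ j k, 0 ≤ B j k) {v : Fin N → ℝ} (hv0 : 0 ≤ v)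
    (hv : v ≠ 0) (hBv : B *ᵥ v ≤ v) (j : Fin N) : v j ≠ 0 := fun hj =>
  hv <| funext fun i => (hB i j).closed'
    (fun hki hi => eq_zero_of_mulVec_le_of_apply_eq_zero hB0 hv0 hBv hi hki) hj

section Domination

variable {N : ℕ} {A B : Matrix (Fin N) (Fin N) ℝ} {u : Fin N → ℝ}

theorem sum_abs_mul_abs_eq_of_dominated (hAB : ∀ j k, |A j k| ≤ B j k) (hAu : A *ᵥ u = u)
    (hBu : B *ᵥ (fun i => |u i|) = fun i => |u i|) (j : Fin N) :
    ∑ k, |A j k| * |u k| = |u j| := by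
  refine le_antisymm ?_ ?_
  · calc ∑ k, |A j k| * |u k|
        ≤ ∑ k, B j k * |u k| :=
          Finset.sum_le_sum fun k _ => mul_le_mul_of_nonneg_right (hAB j k) (abs_nonneg _)
      _ = |u j| := congrFun hBu j
  · calc |u j| = |∑ k, A j k * u k| := by rw [← congrFun hAu j]; rfl
      _ ≤ ∑ k, |A j k * u k| := Finset.abs_sum_le_sum_abs _ _
      _ = ∑ k, |A j k| * |u k| := by simp only [abs_mul]

theorem abs_apply_eq_of_dominated (hAB : ∀ j k, |A j k| ≤ B j k) (hAu : A *ᵥ u = u)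
    (hBu : B *ᵥ (fun i => |u i|) = fun i => |u i|) (hu : ∀ k, u k ≠ 0) (j k : Fin N) :
    |A j k| = B j k := by
  have hrow : ∑ k, |A j k| * |u k| = ∑ k, B j k * |u k| :=
    (sum_abs_mul_abs_eq_of_dominated hAB hAu hBu j).trans (congrFun hBu j).symm
  have hjk : |A j k| * |u k| = B j k * |u k| :=
    (Finset.sum_eq_sum_iff_of_le fun i _ =>
      mul_le_mul_of_nonneg_right (hAB j i) (abs_nonneg (u i))).1 hrow k (Finset.mem_univ k)
  exact mul_right_cancel₀ (abs_ne_zero.2 (hu k)) hjk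

theorem apply_mul_mul_nonneg_of_dominated (hAB : ∀ j k, |A j k| ≤ B j k) (hAu : A *ᵥ u = u)
    (hBu : B *ᵥ (fun i => |u i|) = fun i => |u i|) (j k : Fin N) :
    0 ≤ A j k * (u j * u k) := by
  have hrow : ∑ k, A j k * u k = u j := congrFun hAu j
  have htriangle : |∑ k, A j k * u k| = ∑ k, |A j k * u k| := by
    simp only [hrow, abs_mul, sum_abs_mul_abs_eq_of_dominated hAB hAu hBu j]
  have hjk := Finset.mul_sum_nonneg_of_abs_sum_eq_sum_abs htriangle (Finset.mem_univ k)
  rw [hrow] at hjk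
  linarith

end Domination

/-- **Domination of matrices (sign structure).** Let `|A| ≤ B` entrywise, `B` irreducible,
`u ≠ 0` with `Au = u`, and `B|u| = |u|`. Then `|A| = B`, every entry of `u` is nonzero,
and, with `ζ_+ = {j | u j > 0}` and `ζ_- = {j | u j < 0}`, one has `A j k ≥ 0` whenever
`j` and `k` lie in the same one of these sets and `A j k ≤ 0` whenever they lie in
different ones. -/
theorem domination_sign_structure
    {N : ℕ} (A B : Matrix (Fin N) (Fin N) ℝ)
    (hAB : ∀ j k, |A j k| ≤ B j k) (hB : MatIrred B)
    (u : Fin N → ℝ) (hu : u ≠ 0) (hAu : A.mulVec u = u)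
    (hBu : B.mulVec (fun i => |u i|) = (fun i => |u i|)) :
    (∀ j k, |A j k| = B j k) ∧ (∀ j, u j ≠ 0) ∧
    (∀ j k, ((0 < u j ∧ 0 < u k) ∨ (u j < 0 ∧ u k < 0)) → 0 ≤ A j k) ∧
    (∀ j k, ((0 < u j ∧ u k < 0) ∨ (u j < 0 ∧ 0 < u k)) → A j k ≤ 0) := by
  have hB0 : ∀ j k, 0 ≤ B j k := fun j k => (abs_nonneg _).trans (hAB j k)
  have habs_ne : (fun i => |u i|) ≠ 0 := fun h =>
    hu <| funext fun i => abs_eq_zero.1 (congrFun h i)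
  have hne : ∀ j, u j ≠ 0 := fun j => abs_ne_zero.1 <|
    hB.apply_ne_zero_of_mulVec_le hB0 (fun i => abs_nonneg (u i)) habs_ne hBu.le j
  have hsign := apply_mul_mul_nonneg_of_dominated hAB hAu hBu
  refine ⟨abs_apply_eq_of_dominated hAB hAu hBu hne, hne, ?_, ?_⟩
  · rintro j k (⟨hj, hk⟩ | ⟨hj, hk⟩)
    · exact nonneg_of_mul_nonneg_left (hsign j k) (mul_pos hj hk)
    · exact nonneg_of_mul_nonneg_left (hsign j k) (mul_pos_of_neg_of_neg hj hk)
  · rintro j k (⟨hj, hk⟩ | ⟨hj, hk⟩)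
    · exact nonpos_of_mul_nonneg_left (hsign j k) (mul_neg_of_pos_of_neg hj hk)
    · exact nonpos_of_mul_nonneg_left (hsign j k) (mul_neg_of_neg_of_pos hj hk)
end

section
/- Let A, B ∈ ℝ^{N×N} with |A| ≤ B entrywise, assume B is irreducible, and let u ∈ ℝ^N be a nonzero vector with Au = u. If B|u| = |u|, then the eigenspace of A for the eigenvalue 1 (taken in ℂ^N) is one-dimensional, and it is spanned by u. -/
open Filter

/-!
Since `|A| ≤ B`, every complex fixed vector `v` of `A` satisfies `|v| ≤ B |v|`. For a nonnegative
irreducible `B`, a nonnegative vector `w` with `B w ≤ w` that vanishes at one index vanishes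
everywhere, because zeros of `w` propagate along the edges of the graph of `B`. Applied to `|u|`
this makes `u` nowhere zero; applied to `t |u| - |v|` with `t = max ‖v k‖ / |u k|` it gives
`|v| = t |u|`, so a fixed vector with one zero entry is zero, and `v - (v i / u i) u` is one.
-/

open Matrix

theorem Matrix.norm_map_ofReal_mulVec_apply_le {m n : Type*} [Fintype n]
    {A B : Matrix m n ℝ} (hAB : ∀ j k, |A j k| ≤ B j k) (v : n → ℂ) (j : m) :
    ‖(A.map Complex.ofReal *ᵥ v) j‖ ≤ (B *ᵥ fun k => ‖v k‖) j :=
  calc ‖∑ k, (A j k : ℂ) * v k‖ ≤ ∑ k, ‖(A j k : ℂ) * v k‖ := norm_sum_le _ _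
    _ = ∑ k, |A j k| * ‖v k‖ := by simp only [norm_mul, Complex.norm_real, Real.norm_eq_abs]
    _ ≤ ∑ k, B j k * ‖v k‖ :=
      Finset.sum_le_sum fun k _ => mul_le_mul_of_nonneg_right (hAB j k) (norm_nonneg _)

section Irreducible

variable {N : ℕ} {B : Matrix (Fin N) (Fin N) ℝ}

theorem MatIrred.eq_zero_of_mulVec_le (hB0 : ∀ j k, 0 ≤ B j k) (hB : MatIrred B)
    {w : Fin N → ℝ} (hw : 0 ≤ w) (hBw : B *ᵥ w ≤ w) {j : Fin N} (hj : w j = 0) : w = 0 := by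
  have propagate : ∀ j k, w j = 0 → B j k ≠ 0 → w k = 0 := by
    intro j k hj hjk
    have hterm : ∀ m ∈ Finset.univ, 0 ≤ B j m * w m := fun m _ => mul_nonneg (hB0 j m) (hw m)
    have hsum : ∑ m, B j m * w m = 0 :=
      le_antisymm (hj ▸ hBw j) (Finset.sum_nonneg hterm)
    exact (mul_eq_zero.mp ((Finset.sum_eq_zero_iff_of_nonneg hterm).mp hsum k
      (Finset.mem_univ k))).resolve_left hjk
  funext k
  induction hB k j using Relation.TransGen.head_induction_on with
  | single h => exact propagate _ _ hj h
  | head h _ ih => exact propagate _ _ ih h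

theorem MatIrred.apply_ne_zero_of_mulVec_abs_eq (hB0 : ∀ j k, 0 ≤ B j k) (hB : MatIrred B)
    {u : Fin N → ℝ} (hu : u ≠ 0) (hBu : B *ᵥ (fun i => |u i|) = fun i => |u i|) (j : Fin N) :
    u j ≠ 0 := by
  intro huj
  have h := hB.eq_zero_of_mulVec_le hB0 (fun i => abs_nonneg (u i)) hBu.le
    (show |u j| = 0 by rw [huj, abs_zero])
  exact hu (funext fun i => abs_eq_zero.mp (congrFun h i))

theorem MatIrred.eq_zero_of_map_ofReal_mulVec_eq_self {A : Matrix (Fin N) (Fin N) ℝ}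
    (hAB : ∀ j k, |A j k| ≤ B j k) (hB : MatIrred B) {u : Fin N → ℝ} (hu : ∀ j, u j ≠ 0)
    (hBu : B *ᵥ (fun i => |u i|) = fun i => |u i|)
    {v : Fin N → ℂ} (hv : A.map Complex.ofReal *ᵥ v = v) {i : Fin N} (hi : v i = 0) :
    v = 0 := by
  have hB0 : ∀ j k, 0 ≤ B j k := fun j k => (abs_nonneg _).trans (hAB j k)
  have : Nonempty (Fin N) := ⟨i⟩
  obtain ⟨j, hj⟩ := Finite.exists_max fun k => ‖v k‖ / |u k|
  set t := ‖v j‖ / |u j|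
  set w : Fin N → ℝ := t • (fun k => |u k|) - fun k => ‖v k‖
  have hw : 0 ≤ w := fun k => by
    have := hj k
    rw [div_le_iff₀ (abs_pos.mpr (hu k))] at this
    simpa [w] using this
  have hBw : B *ᵥ w ≤ w := by
    have hv_le : (fun k => ‖v k‖) ≤ B *ᵥ fun k => ‖v k‖ := fun k => by
      simpa only [hv] using norm_map_ofReal_mulVec_apply_le hAB v k
    rw [mulVec_sub, mulVec_smul, hBu]
    exact sub_le_sub_left hv_le _
  have hwj : w j = 0 := by simp [w, t, div_mul_cancel₀ _ (abs_ne_zero.mpr (hu j))]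
  have hw0 := hB.eq_zero_of_mulVec_le hB0 hw hBw hwj
  have ht : t = 0 := by
    simpa [w, hi, hu i] using congrFun hw0 i
  funext k
  simpa [w, ht] using congrFun hw0 k

end Irreducible

/-- **Domination of matrices (simplicity of the eigenvalue 1).** Let `|A| ≤ B` entrywise,
`B` irreducible, `u ≠ 0` with `Au = u`, and `B|u| = |u|`. Then the eigenspace of `A` for
the eigenvalue `1`, taken in `ℂ^N`, is one-dimensional and spanned by `u`. -/
theorem domination_eigenspace_simple
    {N : ℕ} (A B : Matrix (Fin N) (Fin N) ℝ)
    (hAB : ∀ j k, |A j k| ≤ B j k) (hB : MatIrred B)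
    (u : Fin N → ℝ) (hu : u ≠ 0) (hAu : A.mulVec u = u)
    (hBu : B.mulVec (fun i => |u i|) = (fun i => |u i|)) :
    Module.End.eigenspace (Matrix.toLin' (A.map Complex.ofReal)) 1 =
      Submodule.span ℂ {fun i => (u i : ℂ)} ∧
    Module.finrank ℂ
      (Module.End.eigenspace (Matrix.toLin' (A.map Complex.ofReal)) 1) = 1 := by
  have hB0 : ∀ j k, 0 ≤ B j k := fun j k => (abs_nonneg _).trans (hAB j k)
  have hu0 := hB.apply_ne_zero_of_mulVec_abs_eq hB0 hu hBu
  have hmem : ∀ v, v ∈ Module.End.eigenspace (toLin' (A.map Complex.ofReal)) 1 ↔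
      A.map Complex.ofReal *ᵥ v = v := fun v => by
    rw [Module.End.mem_eigenspace_iff, toLin'_apply, one_smul]
  set uc : Fin N → ℂ := fun i => (u i : ℂ)
  have huc : A.map Complex.ofReal *ᵥ uc = uc := funext fun j => by
    simpa [uc, mulVec, dotProduct] using congrArg Complex.ofReal (congrFun hAu j)
  obtain ⟨i, -⟩ := Function.ne_iff.mp hu
  have hspan :
      Module.End.eigenspace (toLin' (A.map Complex.ofReal)) 1 = Submodule.span ℂ {uc} := by
    refine le_antisymm (fun v hv => ?_) ?_
    · have hvi : v - (v i / u i) • uc = 0 :=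
        hB.eq_zero_of_map_ofReal_mulVec_eq_self hAB hu0 hBu (i := i)
          (by rw [mulVec_sub, mulVec_smul, (hmem v).1 hv, huc]) (by simp [uc, hu0 i])
      rw [sub_eq_zero.mp hvi]
      exact Submodule.smul_mem _ _ (Submodule.mem_span_singleton_self uc)
    · rw [Submodule.span_le, Set.singleton_subset_iff]
      exact (hmem uc).2 huc
  have huc0 : uc ≠ 0 := fun h => hu0 i (by simpa [uc] using congrFun h i)
  exact ⟨hspan, hspan ▸ finrank_span_singleton huc0⟩
end

section
/- Let A, B ∈ ℝ^{N×N} with |A| ≤ B entrywise, assume B is irreducible, and let u ∈ ℝ^N be a nonzero vector with Au = u. If B|u| = |u|, then A and B are similar matrices; i.e., there exists an invertible matrix C ∈ ℂ^{N×N} such that A = C B C^{-1}. -/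
/-!
Since `B ≥ 0`, the zero set of the fixed vector `|u|` is closed under going backwards along the
edges of the graph of `B`; by irreducibility `|u|` is therefore strictly positive. With
`D = diag (sign u)` we get `D A D ≤ |A| ≤ B` entrywise and `(D A D) |u| = D A u = D u = |u| = B |u|`,
so positivity of `|u|` forces `D A D = B`. As `D² = 1`, `A = D B D⁻¹`.
-/

open Filter

namespace Matrix

variable {ι : Type*} [Fintype ι]

theorem eq_zero_of_mulVec_apply_eq_zero {κ : Type*} {B : Matrix κ ι ℝ}
    (hB : ∀ j k, 0 ≤ B j k) {v : ι → ℝ} (hv : ∀ k, 0 ≤ v k) {j : κ} {k : ι}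
    (hBv : (B *ᵥ v) j = 0) (hjk : B j k ≠ 0) : v k = 0 := by
  have hterms := (Finset.sum_eq_zero_iff_of_nonneg fun l _ => mul_nonneg (hB j l) (hv l)).1 hBv
  exact (mul_eq_zero.1 (hterms k (Finset.mem_univ k))).resolve_left hjk

theorem eq_of_le_of_mulVec_eq {κ : Type*} {M B : Matrix κ ι ℝ}
    (hle : ∀ j k, M j k ≤ B j k) {w : ι → ℝ} (hw : ∀ k, 0 < w k) (h : M *ᵥ w = B *ᵥ w) :
    M = B := by
  ext j k
  have hterms := (Finset.sum_eq_sum_iff_of_le fun l _ =>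
    mul_le_mul_of_nonneg_right (hle j l) (hw l).le).1 (congrFun h j)
  exact mul_right_cancel₀ (hw k).ne' (hterms k (Finset.mem_univ k))

variable [DecidableEq ι]

theorem diagonal_sign_mulVec_abs (u : ι → ℝ) :
    diagonal (fun j => (SignType.sign (u j) : ℝ)) *ᵥ (fun j => |u j|) = u := by
  ext j
  simp only [mulVec_diagonal, sign_mul_abs]

theorem diagonal_sign_mul_self {u : ι → ℝ} (hu : ∀ j, u j ≠ 0) :
    diagonal (fun j => (SignType.sign (u j) : ℝ)) *
      diagonal (fun j => (SignType.sign (u j) : ℝ)) = 1 := by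
  rw [diagonal_mul_diagonal, ← diagonal_one]
  exact congrArg diagonal <| funext fun j => by rcases (hu j).lt_or_gt with h | h <;> simp [h]

theorem exists_isUnit_map_eq_mul_mul_inv {R S : Type*} [CommRing R] [CommRing S] (f : R →+* S)
    {A B D : Matrix ι ι R} (hDD : D * D = 1) (hDAD : D * A * D = B) :
    ∃ C : Matrix ι ι S, IsUnit C ∧ A.map f = C * B.map f * C⁻¹ := by
  have hA : A = D * B * D := by
    rw [← hDAD, ← mul_assoc, ← mul_assoc, hDD, one_mul, mul_assoc, hDD, mul_one]
  have hCC : f.mapMatrix D * f.mapMatrix D = 1 := by rw [← map_mul, hDD, map_one]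
  refine ⟨f.mapMatrix D, .of_mul_eq_one _ hCC, ?_⟩
  rw [inv_eq_left_inv hCC, hA, ← RingHom.mapMatrix_apply, map_mul, map_mul]
  rfl

end Matrix

theorem SignType.abs_coe_mul_mul_coe_le (s t : SignType) (a : ℝ) : |(s : ℝ) * a * t| ≤ |a| := by
  cases s <;> cases t <;> simp

open Matrix

theorem MatIrred.pos_of_mulVec_eq_self_s8 {N : ℕ} {B : Matrix (Fin N) (Fin N) ℝ} (hB : MatIrred B)
    (hBnn : ∀ j k, 0 ≤ B j k) {v : Fin N → ℝ} (hv : ∀ k, 0 ≤ v k) (hv0 : v ≠ 0)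
    (hBv : B *ᵥ v = v) (k : Fin N) : 0 < v k := by
  have hstep {j k : Fin N} (hj : v j = 0) (hjk : B j k ≠ 0) : v k = 0 :=
    eq_zero_of_mulVec_apply_eq_zero hBnn hv (by rw [hBv, hj]) hjk
  refine (hv k).lt_of_ne' fun hk => ?_
  obtain ⟨a, ha⟩ := Function.ne_iff.1 hv0
  suffices ∀ c, Relation.TransGen (fun k j => B j k ≠ 0) a c → v c = 0 → v a = 0 from
    ha (this k (hB a k) hk)
  intro c hac
  induction hac with
  | single hab => exact fun hb => hstep hb hab
  | tail _ hbc ih => exact fun hc => ih (hstep hc hbc)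

/-- **Domination of matrices (similarity).** Let `|A| ≤ B` entrywise, `B` irreducible,
`u ≠ 0` with `Au = u`, and `B|u| = |u|`. Then `A` and `B` are similar: there is an
invertible matrix `C ∈ ℂ^{N×N}` with `A = C B C⁻¹`. -/
theorem domination_similarity
    {N : ℕ} (A B : Matrix (Fin N) (Fin N) ℝ)
    (hAB : ∀ j k, |A j k| ≤ B j k) (hB : MatIrred B)
    (u : Fin N → ℝ) (hu : u ≠ 0) (hAu : A.mulVec u = u)
    (hBu : B.mulVec (fun i => |u i|) = (fun i => |u i|)) :
    ∃ C : Matrix (Fin N) (Fin N) ℂ, IsUnit C ∧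
      A.map Complex.ofReal = C * B.map Complex.ofReal * C⁻¹ := by
  have hBnn : ∀ j k, 0 ≤ B j k := fun j k => (abs_nonneg _).trans (hAB j k)
  have hw : ∀ k, 0 < |u k| := hB.pos_of_mulVec_eq_self_s8 hBnn (fun k => abs_nonneg _)
    (fun h => hu (funext fun k => abs_eq_zero.1 (congrFun h k))) hBu
  set D := diagonal fun j => (SignType.sign (u j) : ℝ)
  have hDD : D * D = 1 := diagonal_sign_mul_self fun k => abs_pos.1 (hw k)
  have hDw : D *ᵥ (fun i => |u i|) = u := diagonal_sign_mulVec_abs u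
  have hDAD : D * A * D = B := by
    refine eq_of_le_of_mulVec_eq (fun j k => ?_) hw ?_
    · simpa [D, diagonal_mul, mul_diagonal] using
        (le_abs_self _).trans ((SignType.abs_coe_mul_mul_coe_le _ _ (A j k)).trans (hAB j k))
    · calc (D * A * D) *ᵥ (fun i => |u i|) = D *ᵥ (A *ᵥ (D *ᵥ fun i => |u i|)) := by
            rw [mulVec_mulVec, mulVec_mulVec]
        _ = D *ᵥ (D *ᵥ fun i => |u i|) := by rw [hDw, hAu]
        _ = B *ᵥ (fun i => |u i|) := by rw [mulVec_mulVec, hDD, one_mulVec, hBu]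
  exact exists_isUnit_map_eq_mul_mul_inv Complex.ofRealHom hDD hDAD
end

section
/- Let (Z, d) be a connected metric space, let G : Z → Z be Lipschitz continuous with constant 1 (i.e., d(G(z₁), G(z₂)) ≤ d(z₁, z₂) for all z₁, z₂ ∈ Z), and let z* ∈ Z be a fixed point of G that is locally asymptotically stable. Then z* is globally attractive: for every z ∈ Z the iterates G^n(z) converge to z* as n → ∞. In particular, z* is the only fixed point of G. -/
open Filter

/-- **Global attractivity from local asymptotic stability for non-expansive maps.**
Let `(Z, d)` be a connected metric space, `G : Z → Z` Lipschitz continuous with constant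
`1`, and `z*` a fixed point of `G` that is Lyapunov stable and locally attractive. Then
for every `z ∈ Z` the iterates `G^n(z)` converge to `z*`, and `z*` is the only fixed
point of `G`. -/
theorem global_attractivity_of_nonexpansive
    {Z : Type*} [MetricSpace Z] [ConnectedSpace Z]
    (G : Z → Z) (hLip : ∀ a b : Z, dist (G a) (G b) ≤ dist a b)
    (zstar : Z) (hfix : G zstar = zstar)
    (hLyap : ∀ ε > (0 : ℝ), ∃ δ > (0 : ℝ), ∀ z : Z, dist z zstar < δ →
      ∀ n : ℕ, dist (G^[n] z) (G^[n] zstar) < ε)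
    (hattr : ∃ δ > (0 : ℝ), ∀ z : Z, dist z zstar < δ →
      Tendsto (fun n => G^[n] z) atTop (nhds zstar)) :
    (∀ z : Z, Tendsto (fun n => G^[n] z) atTop (nhds zstar)) ∧
    (∀ z : Z, G z = z → z = zstar) := by
  obtain ⟨δ, hδ, hδattr⟩ := hattr
  -- iterates are non-expansive
  have hiter : ∀ (n : ℕ) (a b : Z), dist (G^[n] a) (G^[n] b) ≤ dist a b := by
    intro n
    induction n with
    | zero => intro a b; simp
    | succ n ih =>
      intro a b
      simp only [Function.iterate_succ_apply]
      exact le_trans (ih (G a) (G b)) (hLip a b)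
  set A : Set Z := {z | Tendsto (fun n => G^[n] z) atTop (nhds zstar)} with hA
  -- key: if z' ∈ A and dist z z' < δ/2 then z ∈ A
  have key : ∀ z' ∈ A, ∀ z : Z, dist z z' < δ / 2 → z ∈ A := by
    intro z' hz' z hzz'
    have := (Metric.tendsto_atTop.mp hz') (δ / 2) (by linarith)
    obtain ⟨N, hN⟩ := this
    have hNz : dist (G^[N] z) zstar < δ := by
      calc dist (G^[N] z) zstar ≤ dist (G^[N] z) (G^[N] z') + dist (G^[N] z') zstar :=
            dist_triangle _ _ _
        _ ≤ dist z z' + dist (G^[N] z') zstar := by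
            have := hiter N z z'; linarith
        _ < δ / 2 + δ / 2 := by
            have := hN N le_rfl; linarith
        _ = δ := by ring
    have htail : Tendsto (fun n => G^[n] (G^[N] z)) atTop (nhds zstar) := hδattr _ hNz
    have heq : (fun n => G^[n] (G^[N] z)) = fun n => G^[n + N] z := by
      funext n; exact (Function.iterate_add_apply G n N z).symm
    rw [heq] at htail
    exact (tendsto_add_atTop_iff_nat N).mp htail
  have hAopen : IsOpen A := by
    rw [Metric.isOpen_iff]
    intro z hz
    exact ⟨δ / 2, by linarith, fun y hy => key z hz y (Metric.mem_ball.mp hy)⟩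
  have hAclosed : IsClosed A := by
    rw [← isOpen_compl_iff, Metric.isOpen_iff]
    intro z hz
    refine ⟨δ / 2, by linarith, fun y hy hyA => hz ?_⟩
    exact key y hyA z (by rw [dist_comm]; exact Metric.mem_ball.mp hy)
  have hmem : zstar ∈ A := by
    have : ∀ n, G^[n] zstar = zstar := fun n => Function.iterate_fixed hfix n
    simp only [hA, Set.mem_setOf_eq, this]
    exact tendsto_const_nhds
  have hall : A = Set.univ := IsClopen.eq_univ ⟨hAclosed, hAopen⟩ ⟨zstar, hmem⟩
  have hmain : ∀ z : Z, Tendsto (fun n => G^[n] z) atTop (nhds zstar) := by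
    intro z
    have : z ∈ A := hall ▸ Set.mem_univ z
    exact this
  refine ⟨hmain, fun z hz => ?_⟩
  have hconst : ∀ n, G^[n] z = z := fun n => Function.iterate_fixed hz n
  have := hmain z
  simp only [hconst] at this
  exact (tendsto_nhds_unique tendsto_const_nhds this)
end

section
/- Let ‖·‖ be a norm on ℝ^N, let G : ℝ^N → ℝ^N be Lipschitz continuous with constant 1 with respect to ‖·‖, let u ∈ ℝ^N, and let z* ∈ ℝ^N be such that z* + λu is a fixed point of G for every λ ∈ ℝ. Let z ∈ ℝ^N and suppose there is a sequence (λ_n) of real numbers such that G^n(z) − λ_n u → z* as n → ∞. Then the sequence (G^n(z)) is a Cauchy sequence in ℝ^N, and its limit is a fixed point of G. -/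
open Filter

/-- Let `E` be a finite-dimensional real normed space (e.g. `ℝ^N` with an arbitrary
norm), let `G : E → E` be Lipschitz continuous with constant `1` with respect to the
norm, and let `z* + λ • u` be a fixed point of `G` for every `λ ∈ ℝ`. If for some `z`
there is a sequence `(λ_n)` of reals with `G^[n] z - λ_n • u → z*`, then `(G^[n] z)` is
a Cauchy sequence and its limit is a fixed point of `G`. -/
theorem iterates_cauchy_of_quotient_convergence
    {E : Type*} [NormedAddCommGroup E] [NormedSpace ℝ E] [FiniteDimensional ℝ E]
    (G : E → E) (hLip : ∀ a b : E, ‖G a - G b‖ ≤ ‖a - b‖)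
    (u zstar : E) (hfix : ∀ lam : ℝ, G (zstar + lam • u) = zstar + lam • u)
    (z : E) (lam : ℕ → ℝ)
    (hconv : Tendsto (fun n => G^[n] z - lam n • u) atTop (nhds zstar)) :
    CauchySeq (fun n => G^[n] z) ∧
    ∃ y : E, Tendsto (fun n => G^[n] z) atTop (nhds y) ∧ G y = y := by
  set a : ℕ → E := fun n => G^[n] z with ha
  have hG : LipschitzWith 1 G := by
    apply LipschitzWith.of_dist_le_mul
    intro x y
    simpa [dist_eq_norm] using hLip x y
  have hmono : ∀ (lam0 : ℝ) (n m : ℕ), n ≤ m →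
      ‖a m - (zstar + lam0 • u)‖ ≤ ‖a n - (zstar + lam0 • u)‖ := by
    intro lam0 n m hnm
    induction m with
    | zero =>
      have : n = 0 := Nat.le_zero.mp hnm
      simp [this]
    | succ m ih =>
      rcases Nat.lt_or_ge n (m + 1) with h | h
      · have h' := ih (Nat.lt_succ_iff.mp h)
        calc ‖a (m + 1) - (zstar + lam0 • u)‖
            = ‖G (a m) - G (zstar + lam0 • u)‖ := by
              simp [ha, Function.iterate_succ_apply', hfix lam0]
          _ ≤ ‖a m - (zstar + lam0 • u)‖ := hLip _ _
          _ ≤ _ := h'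
      · have : n = m + 1 := le_antisymm hnm h
        simp [this]
  set ε : ℕ → ℝ := fun n => ‖a n - lam n • u - zstar‖ with hε
  have hε0 : Tendsto ε atTop (nhds 0) := by
    have := tendsto_iff_norm_sub_tendsto_zero.mp hconv
    simpa [hε, ha] using this
  have key : ∀ N n, N ≤ n → ‖a n - (zstar + lam N • u)‖ ≤ ε N := by
    intro N n hNn
    refine le_trans (hmono (lam N) N n hNn) (le_of_eq ?_)
    simp only [hε]
    congr 1
    abel
  have hC : CauchySeq a := by
    apply cauchySeq_of_le_tendsto_0 (fun n => 2 * ε n)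
    · intro n m N hn hm
      have h1 := key N n hn
      have h2 := key N m hm
      calc dist (a n) (a m)
          ≤ dist (a n) (zstar + lam N • u) + dist (zstar + lam N • u) (a m) :=
            dist_triangle _ _ _
        _ ≤ ε N + ε N := by
            rw [dist_eq_norm, dist_eq_norm']
            exact add_le_add h1 h2
        _ = 2 * ε N := by ring
    · simpa using hε0.const_mul (2 : ℝ)
  refine ⟨hC, ?_⟩
  obtain ⟨y, hy⟩ := cauchySeq_tendsto_of_complete hC
  refine ⟨y, hy, ?_⟩
  have h1 : Tendsto (fun n => a (n + 1)) atTop (nhds y) :=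
    hy.comp (tendsto_add_atTop_nat 1)
  have h2 : Tendsto (fun n => G (a n)) atTop (nhds (G y)) :=
    (hG.continuous.tendsto y).comp hy
  have heq : (fun n => a (n + 1)) = fun n => G (a n) := by
    funext n; simp [ha, Function.iterate_succ_apply']
  rw [heq] at h1
  exact tendsto_nhds_unique h2 h1
end
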